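/- Let I₀ = {f ∈ C^∞(ℝ) | f(0) = 0} be the ideal of smooth real functions vanishing at 0, and let I₀² denote its square. In the C^∞(ℝ)-module Q = C^∞(ℝ)/I₀², the class of the identity function x ↦ x is nonzero, yet it lies in I_m·Q for every m ∈ ℝ. In particular, Q is not fiber-determined. -/

import Mathlib

open scoped Manifold

noncomputable section

/-- The ring `C^∞(ℝ)` of smooth real-valued functions on `ℝ`. -/
abbrev SmoothR : Type := C^(⊤ : ℕ∞)⟮modelWithCornersSelf ℝ ℝ, ℝ; ℝ⟯

/-- The ideal `I_m` of smooth functions vanishing at `m`. -/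
def idealAtR (m : ℝ) : Ideal SmoothR :=
  RingHom.ker (ContMDiffMap.evalRingHom m)

lemma eval_id' (m : ℝ) : ContMDiffMap.evalRingHom m (ContMDiffMap.id : SmoothR) = m := rfl

lemma eval_alg' (m r : ℝ) : ContMDiffMap.evalRingHom m (algebraMap ℝ SmoothR r) = r := rfl

lemma deriv_zero_of_mem_sq (p : SmoothR) (hp : p ∈ idealAtR 0 ^ 2) :
    HasDerivAt (p : ℝ → ℝ) 0 0 := by
  rw [pow_two] at hp
  refine Submodule.mul_induction_on hp ?_ ?_
  · intro f hf g hg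
    have hf0 : (f : ℝ → ℝ) 0 = 0 := hf
    have hg0 : (g : ℝ → ℝ) 0 = 0 := hg
    have hfd : HasDerivAt (f : ℝ → ℝ) (deriv f 0) 0 :=
      ((f.contMDiff.contDiff.differentiable (by simp)) 0).hasDerivAt
    have hgd : HasDerivAt (g : ℝ → ℝ) (deriv g 0) 0 :=
      ((g.contMDiff.contDiff.differentiable (by simp)) 0).hasDerivAt
    have := hfd.mul hgd
    rw [hf0, hg0] at this
    simpa using this
  · intro a b ha hb
    simpa using ha.add hb

lemma mk_eq_smul_one (p : Ideal SmoothR) (f : SmoothR) :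
    Submodule.Quotient.mk (p := p) f = f • Submodule.Quotient.mk (1 : SmoothR) := by
  rw [← Submodule.Quotient.mk_smul, smul_eq_mul, mul_one]

/-- In the `C^∞(ℝ)`-module `Q = C^∞(ℝ)/I₀²`, the class of the identity
function is nonzero yet lies in `I_m · Q` for every `m ∈ ℝ`; in particular `Q` is not
fiber-determined. -/
theorem quotient_by_ideal_squared_not_fiberDetermined :
    (Submodule.Quotient.mk (p := (idealAtR 0 ^ 2 : Ideal SmoothR))
        (ContMDiffMap.id : SmoothR) ≠ 0) ∧
    (∀ m : ℝ,
      Submodule.Quotient.mk (p := (idealAtR 0 ^ 2 : Ideal SmoothR))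
          (ContMDiffMap.id : SmoothR) ∈
        idealAtR m • (⊤ : Submodule SmoothR (SmoothR ⧸ (idealAtR 0 ^ 2 : Ideal SmoothR)))) ∧
    ¬ (∀ q : SmoothR ⧸ (idealAtR 0 ^ 2 : Ideal SmoothR),
        (∀ m : ℝ, q ∈ idealAtR m •
          (⊤ : Submodule SmoothR (SmoothR ⧸ (idealAtR 0 ^ 2 : Ideal SmoothR)))) → q = 0) := by
  have hid0 : (ContMDiffMap.id : SmoothR) ∈ idealAtR 0 := by
    simp [idealAtR, RingHom.mem_ker, eval_id']
  have h1 : (Submodule.Quotient.mk (p := (idealAtR 0 ^ 2 : Ideal SmoothR))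
      (ContMDiffMap.id : SmoothR) ≠ 0) := by
    intro h
    rw [Submodule.Quotient.mk_eq_zero] at h
    have hd := deriv_zero_of_mem_sq _ h
    have hone : HasDerivAt ((ContMDiffMap.id : SmoothR) : ℝ → ℝ) 1 0 := by
      have : ((ContMDiffMap.id : SmoothR) : ℝ → ℝ) = fun x => x := rfl
      rw [this]; exact hasDerivAt_id 0
    have := hone.unique hd
    norm_num at this
  have h2 : ∀ m : ℝ,
      Submodule.Quotient.mk (p := (idealAtR 0 ^ 2 : Ideal SmoothR))
          (ContMDiffMap.id : SmoothR) ∈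
        idealAtR m • (⊤ : Submodule SmoothR (SmoothR ⧸ (idealAtR 0 ^ 2 : Ideal SmoothR))) := by
    intro m
    by_cases hm : m = 0
    · subst hm
      rw [mk_eq_smul_one]
      exact Submodule.smul_mem_smul hid0 trivial
    · set c : SmoothR := algebraMap ℝ SmoothR m⁻¹ with hc
      set g : SmoothR := ContMDiffMap.id - c * ContMDiffMap.id * ContMDiffMap.id with hg
      have hgm : g ∈ idealAtR m := by
        simp only [idealAtR, RingHom.mem_ker, hg, map_sub, map_mul, eval_id', hc, eval_alg']
        field_simp
        ring
      have hsq : (c * ContMDiffMap.id * ContMDiffMap.id : SmoothR) ∈ idealAtR 0 ^ 2 := by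
        rw [pow_two]
        exact Ideal.mul_mem_mul (Ideal.mul_mem_left _ c hid0) hid0
      have heq : (Submodule.Quotient.mk (p := (idealAtR 0 ^ 2 : Ideal SmoothR))
          (ContMDiffMap.id : SmoothR)) = Submodule.Quotient.mk g := by
        rw [Submodule.Quotient.eq]
        simpa [hg] using hsq
      rw [heq, mk_eq_smul_one]
      exact Submodule.smul_mem_smul hgm trivial
  exact ⟨h1, h2, fun h => h1 (h _ h2)⟩
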